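/- Let φ₁ and φ₂ be indecomposable 𝔖∞-central states on G = Γ≀𝔖∞ (each admitting a GNS triple whose center π(G)′ ∩ π(G)″ consists of scalar multiples of the identity). Let σ_n ∈ 𝔖∞ denote the n-cycle with σ_n(i) = i+1 for i < n, σ_n(n) = 1, and σ_n(i) = i for i > n. If φ₁(σ_n·γ) = φ₂(σ_n·γ) for every n ∈ ℕ and every γ = (γ₁,...,γ_n,e,e,...) ∈ Γ^∞_e with γ_i = e for all i > n, then φ₁ = φ₂. -/

import Mathlib

open scoped Classical ComplexOrder
open Filter Topology

noncomputable section

namespace DN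

local notation "⟪" x ", " y "⟫" => @inner ℂ _ _ x y

/-- The group `𝔖∞` of finitely supported permutations of `ℕ`. -/
def SInf : Subgroup (Equiv.Perm ℕ) where
  carrier := {s | {i | s i ≠ i}.Finite}
  one_mem' := by simp
  mul_mem' := by
    intro s t hs ht
    refine Set.Finite.subset (hs.union ht) fun i hi => ?_
    simp only [Set.mem_setOf_eq, Set.mem_union, Equiv.Perm.mul_apply] at hi ⊢
    by_contra h
    push_neg at h
    rw [h.2, h.1] at hi
    exact hi rfl
  inv_mem' := by
    intro s hs
    refine Set.Finite.subset hs fun i hi => ?_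
    simp only [Set.mem_setOf_eq] at hi ⊢
    intro h
    exact hi (Equiv.Perm.inv_eq_iff_eq.mpr h.symm)

theorem mem_SInf (s : Equiv.Perm ℕ) : s ∈ SInf ↔ {i | s i ≠ i}.Finite := Iff.rfl

/-- The group `Γ^∞_e` of finitely supported sequences in `Γ`. -/
def GammaE (Γ : Type*) [Group Γ] : Subgroup (ℕ → Γ) where
  carrier := {γ | {i | γ i ≠ 1}.Finite}
  one_mem' := by simp
  mul_mem' := by
    intro f g hf hg
    refine Set.Finite.subset (hf.union hg) fun i hi => ?_
    simp only [Set.mem_setOf_eq, Set.mem_union, Pi.mul_apply] at hi ⊢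
    by_contra h
    push_neg at h
    rw [h.1, h.2] at hi
    exact hi (one_mul 1)
  inv_mem' := by
    intro f hf
    refine Set.Finite.subset hf fun i hi => ?_
    simp only [Set.mem_setOf_eq, Pi.inv_apply, ne_eq, inv_eq_one] at hi ⊢
    exact hi

theorem mem_GammaE {Γ : Type*} [Group Γ] (γ : ℕ → Γ) :
    γ ∈ GammaE Γ ↔ {i | γ i ≠ 1}.Finite := Iff.rfl

/-- The permutation action of `Equiv.Perm ℕ` on `ℕ → Γ`. -/
def permMulAut (Γ : Type*) [Group Γ] (s : Equiv.Perm ℕ) : MulAut (ℕ → Γ) where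
  toFun γ := γ ∘ s.symm
  invFun γ := γ ∘ s
  left_inv γ := by funext i; simp [Function.comp]
  right_inv γ := by funext i; simp [Function.comp]
  map_mul' γ δ := rfl

def permAction (Γ : Type*) [Group Γ] : Equiv.Perm ℕ →* MulAut (ℕ → Γ) where
  toFun := permMulAut Γ
  map_one' := by ext γ i; rfl
  map_mul' s t := by ext γ i; rfl

/-- The (big) wreath product `(ℕ → Γ) ⋊ Perm ℕ`. -/
abbrev W (Γ : Type*) [Group Γ] := (ℕ → Γ) ⋊[permAction Γ] Equiv.Perm ℕ

/-- The wreath product `G = Γ ≀ 𝔖∞`, as the subgroup of `W Γ` of finitely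
supported elements. -/
def WG (Γ : Type*) [Group Γ] : Subgroup (W Γ) where
  carrier := {g | {i | g.right i ≠ i}.Finite ∧ {i | g.left i ≠ 1}.Finite}
  one_mem' := by
    constructor
    · convert Set.finite_empty using 1
      ext i; simp
    · convert Set.finite_empty using 1
      ext i; simp
  mul_mem' := by
    rintro a b ⟨ha1, ha2⟩ ⟨hb1, hb2⟩
    constructor
    · refine Set.Finite.subset (ha1.union hb1) fun i hi => ?_
      simp only [Set.mem_setOf_eq, Set.mem_union, SemidirectProduct.mul_right,
        Equiv.Perm.mul_apply] at hi ⊢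
      by_contra h
      push_neg at h
      rw [h.2, h.1] at hi
      exact hi rfl
    · refine Set.Finite.subset (ha2.union (hb2.image a.right)) fun i hi => ?_
      simp only [Set.mem_setOf_eq, SemidirectProduct.mul_left, Pi.mul_apply] at hi
      by_contra h
      simp only [Set.mem_union, Set.mem_setOf_eq, Set.mem_image, not_or, not_exists,
        not_and, not_not] at h
      obtain ⟨h1, h2⟩ := h
      apply hi
      have hb : b.left (a.right⁻¹ i) = 1 := by
        by_contra hc
        exact h2 (a.right⁻¹ i) hc (by simp)
      have hrfl : (permAction Γ a.right b.left) i = b.left (a.right⁻¹ i) := rfl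
      rw [h1, one_mul, hrfl, hb]
  inv_mem' := by
    rintro a ⟨ha1, ha2⟩
    constructor
    · refine Set.Finite.subset ha1 fun i hi => ?_
      simp only [Set.mem_setOf_eq, SemidirectProduct.inv_right] at hi ⊢
      intro h
      exact hi (Equiv.Perm.inv_eq_iff_eq.mpr h.symm)
    · refine Set.Finite.subset (Set.Finite.preimage (a.right.injective.injOn) ha2)
        fun i hi => ?_
      simp only [Set.mem_setOf_eq] at hi
      simp only [Set.mem_preimage, Set.mem_setOf_eq]
      intro h
      apply hi
      have hrfl : (a⁻¹).left i = (a.left (a.right i))⁻¹ := rfl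
      rw [hrfl, h, inv_one]

theorem mem_WG {Γ : Type*} [Group Γ] (g : W Γ) :
    g ∈ WG Γ ↔ {i | g.right i ≠ i}.Finite ∧ {i | g.left i ≠ 1}.Finite := Iff.rfl

/-- The canonical copy of `𝔖∞` inside `Γ ≀ 𝔖∞`. -/
def permW {Γ : Type*} [Group Γ] (s : SInf) : WG Γ :=
  ⟨SemidirectProduct.inr s.1, by
    rw [mem_WG]
    constructor
    · have h : (SemidirectProduct.inr s.1 : W Γ).right = s.1 := SemidirectProduct.right_inr _
      rw [h]
      exact s.2
    · convert Set.finite_empty using 1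
      ext i; simp⟩

/-- The canonical copy of `Γ^∞_e` inside `Γ ≀ 𝔖∞`. -/
def seqW {Γ : Type*} [Group Γ] (γ : GammaE Γ) : WG Γ :=
  ⟨SemidirectProduct.inl γ.1, by
    rw [mem_WG]
    constructor
    · convert Set.finite_empty using 1
      ext i; simp
    · have h : (SemidirectProduct.inl γ.1 : W Γ).left = γ.1 := SemidirectProduct.left_inl _
      rw [h]
      exact γ.2⟩

/-- The support of an element of `Γ ≀ 𝔖∞`. -/
def supp {Γ : Type*} [Group Γ] (g : WG Γ) : Set ℕ :=
  {i | (g : W Γ).right i ≠ i ∨ (g : W Γ).left i ≠ 1}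

/-- Positive definiteness of a function on a group. -/
def IsPosDef {G : Type*} [Group G] (φ : G → ℂ) : Prop :=
  ∀ (m : ℕ) (g : Fin m → G) (c : Fin m → ℂ),
    0 ≤ ∑ i, ∑ j, c i * (starRingEnd ℂ) (c j) * φ ((g j)⁻¹ * g i)

/-- A state on a group: normalized positive definite function. -/
def IsState {G : Type*} [Group G] (φ : G → ℂ) : Prop := φ 1 = 1 ∧ IsPosDef φ

/-- `𝔖∞`-centrality of a function on `Γ ≀ 𝔖∞`. -/
def IsSCentral {Γ : Type*} [Group Γ] (φ : WG Γ → ℂ) : Prop :=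
  ∀ (s : SInf) (g : WG Γ), φ (permW s * g * (permW s)⁻¹) = φ g

/-- The commutant of a set of bounded operators. -/
def commutant {H : Type*} [NormedAddCommGroup H] [InnerProductSpace ℂ H]
    (S : Set (H →L[ℂ] H)) : Set (H →L[ℂ] H) := {T | ∀ A ∈ S, T * A = A * T}

variable {Γ : Type*} [Group Γ]
variable {H : Type*} [NormedAddCommGroup H] [InnerProductSpace ℂ H] [CompleteSpace H]

/-- The image set `π(G)` of a representation. -/
def repSet (π : WG Γ →* (H →L[ℂ] H)) : Set (H →L[ℂ] H) := Set.range fun g : WG Γ => π g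

/-- The von Neumann algebra `π(G)''` (double commutant). -/
def vN (π : WG Γ →* (H →L[ℂ] H)) : Set (H →L[ℂ] H) := commutant (commutant (repSet π))

/-- The representation is factorial: the center `π(G)' ∩ π(G)''` consists of scalars. -/
def IsFactorial (π : WG Γ →* (H →L[ℂ] H)) : Prop :=
  ∀ T ∈ commutant (repSet π) ∩ vN π, ∃ c : ℂ, T = c • (1 : H →L[ℂ] H)

/-- `(π, H, ξ)` is a GNS triple for `φ`. -/
structure IsGNS (φ : WG Γ → ℂ) (π : WG Γ →* (H →L[ℂ] H)) (ξ : H) : Prop where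
  unitary : ∀ g, π g ∈ unitary (H →L[ℂ] H)
  norm_one : ‖ξ‖ = 1
  cyclic : Dense ((Submodule.span ℂ (Set.range fun g : WG Γ => π g ξ) : Submodule ℂ H) : Set H)
  inner_eq : ∀ g, φ g = ⟪ξ, π g ξ⟫

theorem swap_mem_SInf (a b : ℕ) : Equiv.swap a b ∈ SInf := by
  rw [mem_SInf]
  refine Set.Finite.subset ((Set.finite_singleton a).insert b) fun i hi => ?_
  simp only [Set.mem_setOf_eq] at hi
  simp only [Set.mem_insert_iff, Set.mem_singleton_iff]
  by_contra h
  push_neg at h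
  exact hi (Equiv.swap_apply_of_ne_of_ne h.2 h.1)

/-- The transposition `(a b)` as an element of `Γ ≀ 𝔖∞`. -/
def swapW {Γ : Type*} [Group Γ] (a b : ℕ) : WG Γ := permW ⟨Equiv.swap a b, swap_mem_SInf a b⟩

def omegaFun (n i : ℕ) : ℕ := if i < n then i + n else if i < 2 * n then i - n else i

theorem omegaFun_invol (n i : ℕ) : omegaFun n (omegaFun n i) = i := by
  unfold omegaFun
  split_ifs <;> first | contradiction | omega

/-- Olshanski's permutation `ω_n`. -/
def omegaPerm (n : ℕ) : Equiv.Perm ℕ :=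
  ⟨omegaFun n, omegaFun n, omegaFun_invol n, omegaFun_invol n⟩

theorem omegaPerm_mem (n : ℕ) : omegaPerm n ∈ SInf := by
  rw [mem_SInf]
  refine Set.Finite.subset (Set.finite_Iio (2 * n)) fun i hi => ?_
  simp only [Set.mem_setOf_eq] at hi
  simp only [Set.mem_Iio]
  by_contra h
  push_neg at h
  apply hi
  show omegaFun n i = i
  unfold omegaFun
  split_ifs <;> first | contradiction | omega

/-- `ω_n` as an element of `Γ ≀ 𝔖∞`. -/
def omegaW {Γ : Type*} [Group Γ] (n : ℕ) : WG Γ := permW ⟨omegaPerm n, omegaPerm_mem n⟩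

def sigmaFun (n i : ℕ) : ℕ := if i + 1 < n then i + 1 else if i + 1 = n then 0 else i

def sigmaInvFun (n i : ℕ) : ℕ := if i < n then (if i = 0 then n - 1 else i - 1) else i

theorem sigma_left_inv (n i : ℕ) : sigmaInvFun n (sigmaFun n i) = i := by
  unfold sigmaFun sigmaInvFun
  split_ifs <;> first | contradiction | omega

theorem sigma_right_inv (n i : ℕ) : sigmaFun n (sigmaInvFun n i) = i := by
  unfold sigmaFun sigmaInvFun
  split_ifs <;> first | contradiction | omega

/-- The cycle `σ_n = (0 1 2 ... n-1)`. -/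
def sigmaPerm (n : ℕ) : Equiv.Perm ℕ :=
  ⟨sigmaFun n, sigmaInvFun n, sigma_left_inv n, sigma_right_inv n⟩

theorem sigmaPerm_mem (n : ℕ) : sigmaPerm n ∈ SInf := by
  rw [mem_SInf]
  refine Set.Finite.subset (Set.finite_Iio n) fun i hi => ?_
  simp only [Set.mem_setOf_eq] at hi
  simp only [Set.mem_Iio]
  by_contra h
  push_neg at h
  apply hi
  show sigmaFun n i = i
  unfold sigmaFun
  split_ifs <;> first | contradiction | omega

/-- The cycle of `s` through the point `i` (the paper's `s_p` for the orbit `p` of `i`). -/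
def cycleAt (s : Equiv.Perm ℕ) (i : ℕ) : Equiv.Perm ℕ where
  toFun j := if s.SameCycle i j then s j else j
  invFun j := if s.SameCycle i j then s⁻¹ j else j
  left_inv j := by
    by_cases h : s.SameCycle i j
    · have h2 : s.SameCycle i (s j) := Equiv.Perm.sameCycle_apply_right.mpr h
      simp [h, h2]
    · simp [h]
  right_inv j := by
    by_cases h : s.SameCycle i j
    · have h2 : s.SameCycle i (s⁻¹ j) := Equiv.Perm.sameCycle_apply_right.mp (by simpa using h)
      simp [h, h2]
    · simp [h]

theorem cycleAt_mem {s : Equiv.Perm ℕ} (hs : s ∈ SInf) (i : ℕ) : cycleAt s i ∈ SInf := by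
  rw [mem_SInf] at hs ⊢
  refine Set.Finite.subset hs fun j hj => ?_
  simp only [Set.mem_setOf_eq] at hj ⊢
  intro h
  apply hj
  show (if s.SameCycle i j then s j else j) = j
  split_ifs with hc
  · exact h
  · rfl

/-- The generalized cycle of `g = sγ` corresponding to the orbit of `i` under `s`. -/
def genCycle {Γ : Type*} [Group Γ] (g : WG Γ) (i : ℕ) : WG Γ :=
  permW ⟨cycleAt (g : W Γ).right i, cycleAt_mem g.2.1 i⟩ *
  seqW ⟨fun k => if ((g : W Γ).right).SameCycle i k then (g : W Γ).left ((g : W Γ).right k)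
      else 1, by
    rw [mem_GammaE]
    refine Set.Finite.subset (Set.Finite.preimage ((g : W Γ).right.injective.injOn) g.2.2)
      fun k hk => ?_
    simp only [Set.mem_setOf_eq] at hk
    simp only [Set.mem_preimage, Set.mem_setOf_eq]
    by_cases hsc : ((g : W Γ).right).SameCycle i k
    · rw [if_pos hsc] at hk; exact hk
    · rw [if_neg hsc] at hk; exact absurd rfl hk⟩

/-- The von Neumann algebra `𝔄_j` generated by `O_j` and the `π(γ)` with `γ` supported at `j`. -/
def Aj (π : WG Γ →* (H →L[ℂ] H)) (O : H →L[ℂ] H) (j : ℕ) : Set (H →L[ℂ] H) :=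
  commutant (commutant
    ({O} ∪ {T | ∃ γ : GammaE Γ, (∀ i, i ≠ j → (γ : ℕ → Γ) i = 1) ∧ T = π (seqW γ)}))


/-!
A factor state `φ` is multiplicative on elements with disjoint supports. Indeed, conjugating `h`
by permutations that fix `supp g` pointwise and push `supp h` off to infinity yields an
asymptotically central sequence `w k` with `φ (g * w k) = φ (g * h)` and `φ (w k) = φ h`; along any
ultrafilter, `π (w k)` converges weakly to an operator in the centre `π(G)′ ∩ π(G)″`, which is a
scalar `c`, so both `φ (g * h)` and `φ g * φ h` equal `c * φ g`.

Splitting off the generalized cycle of `g` through a point of its support strictly shrinks the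
support, so `φ` is determined by its values on generalized cycles. By `𝔖∞`-centrality these may
be conjugated into the form `σ_m * γ` with `γ` supported in `{0, …, m-1}`, where `φ₁` and `φ₂`
agree by hypothesis.
-/

@[simp] theorem permAction_apply (s : Equiv.Perm ℕ) (γ : ℕ → Γ) (j : ℕ) :
    permAction Γ s γ j = γ (s⁻¹ j) := rfl

@[simp] theorem permAction_symm_apply (s : Equiv.Perm ℕ) (γ : ℕ → Γ) (j : ℕ) :
    (permAction Γ s).symm γ j = γ (s j) := rfl

theorem supp_finite (g : WG Γ) : (supp g).Finite :=
  (g.2.1.union g.2.2).subset fun _ hj => hj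

theorem notMem_supp {g : WG Γ} {j : ℕ} :
    j ∉ supp g ↔ (g : W Γ).right j = j ∧ (g : W Γ).left j = 1 := by
  simp [supp]

theorem mem_supp_permW {t : SInf} {j : ℕ} : j ∈ supp (permW t : WG Γ) ↔ t.1 j ≠ j := by
  simp [supp, permW]

theorem eq_one_of_supp_eq_empty {g : WG Γ} (h : supp g = ∅) : g = 1 := by
  have hj : ∀ j, j ∉ supp g := by simp [h]
  refine Subtype.ext (SemidirectProduct.ext ?_ ?_)
  · funext j; exact (notMem_supp.1 (hj j)).2
  · ext j; exact (notMem_supp.1 (hj j)).1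

theorem coe_mul_apply_of_notMem_supp {g h : WG Γ} (hd : Disjoint (supp g) (supp h)) {j : ℕ}
    (hj : j ∉ supp g) :
    ((g * h : WG Γ) : W Γ).left j = (h : W Γ).left j ∧
      ((g * h : WG Γ) : W Γ).right j = (h : W Γ).right j ∧
      ((h * g : WG Γ) : W Γ).left j = (h : W Γ).left j ∧
      ((h * g : WG Γ) : W Γ).right j = (h : W Γ).right j := by
  obtain ⟨hgr, hgl⟩ := notMem_supp.1 hj
  have hfix : ∀ x, x ∉ supp g → (g : W Γ).right x = x := fun x hx => (notMem_supp.1 hx).1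
  have hhj : (h : W Γ).right j ∉ supp g := by
    by_cases hh : (h : W Γ).right j = j
    · rwa [hh]
    · exact Set.disjoint_right.1 hd (Or.inl fun e => hh ((h : W Γ).right.injective e))
  have hhj' : (h : W Γ).right.symm j ∉ supp g := by
    intro hx
    have := (notMem_supp.1 (Set.disjoint_left.1 hd hx)).1
    rw [Equiv.apply_symm_apply] at this
    exact hj (this ▸ hx)
  simp [hgl, hgr, (Equiv.symm_apply_eq _).2 hgr.symm, hfix _ hhj, (notMem_supp.1 hhj').2]

theorem commute_of_disjoint {g h : WG Γ} (hd : Disjoint (supp g) (supp h)) : Commute g h := by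
  have key : ∀ j, (((g * h : WG Γ) : W Γ).left j = ((h * g : WG Γ) : W Γ).left j) ∧
      ((g * h : WG Γ) : W Γ).right j = ((h * g : WG Γ) : W Γ).right j := fun j => by
    by_cases hj : j ∈ supp g
    · obtain ⟨h1, h2, h3, h4⟩ := coe_mul_apply_of_notMem_supp hd.symm (Set.disjoint_left.1 hd hj)
      exact ⟨h3.trans h1.symm, h4.trans h2.symm⟩
    · obtain ⟨h1, h2, h3, h4⟩ := coe_mul_apply_of_notMem_supp hd hj
      exact ⟨h1.trans h3.symm, h2.trans h4.symm⟩
  exact Subtype.ext <|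
    SemidirectProduct.ext (funext fun j => (key j).1) (Equiv.ext fun j => (key j).2)

theorem coe_conj (t : SInf) (g : WG Γ) :
    ((permW t * g * (permW t)⁻¹ : WG Γ) : W Γ) =
      ⟨fun j => (g : W Γ).left (t.1⁻¹ j), t.1 * (g : W Γ).right * t.1⁻¹⟩ := by
  refine SemidirectProduct.ext (funext fun j => ?_) ?_ <;> simp [permW]

theorem mem_supp_conj {t : SInf} {g : WG Γ} {j : ℕ} :
    j ∈ supp (permW t * g * (permW t)⁻¹) ↔ t.1⁻¹ j ∈ supp g := by
  simp only [supp, coe_conj, Set.mem_ofPred_eq, Equiv.Perm.mul_apply, ne_eq,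
    ← Equiv.Perm.eq_inv_iff_eq (f := t.1)]

theorem conj_eq_self {t : SInf} {g : WG Γ} (hfix : ∀ j ∈ supp g, t.1 j = j) :
    permW t * g * (permW t)⁻¹ = g := by
  have hd : Disjoint (supp (permW t : WG Γ)) (supp g) :=
    Set.disjoint_right.2 fun j hj => not_not.2 (hfix j hj) ∘ mem_supp_permW.1
  rw [(commute_of_disjoint hd).eq, mul_inv_cancel_right]

theorem exists_perm_apply_eq_of_injOn {ι α : Type*} (I : Finset ι) {a b : ι → α}
    (ha : Set.InjOn a I) (hb : Set.InjOn b I) :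
    ∃ t : Equiv.Perm α, (∀ k ∈ I, t (a k) = b k) ∧
      ∀ x, x ∉ I.image a → x ∉ I.image b → t x = x := by
  induction I using Finset.induction_on with
  | empty => exact ⟨1, by simp, fun _ _ _ => rfl⟩
  | insert j I hj ih =>
    obtain ⟨t, hab, hfix⟩ := ih (ha.mono (by simp)) (hb.mono (by simp))
    have hne : ∀ k ∈ I, b k ≠ t (a j) ∧ b k ≠ b j := fun k hk => by
      refine ⟨fun e => hj ?_, fun e => hj ?_⟩
      · rw [← hab k hk] at e
        exact ha (by simp [hk]) (by simp) (t.injective e) ▸ hk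
      · exact hb (by simp [hk]) (by simp) e ▸ hk
    refine ⟨Equiv.swap (t (a j)) (b j) * t, fun k hk => ?_, fun x hxa hxb => ?_⟩
    · rcases Finset.mem_insert.1 hk with rfl | hk
      · simp
      · simp [hab k hk, Equiv.swap_apply_of_ne_of_ne (hne k hk).1 (hne k hk).2]
    · simp only [Finset.image_insert, Finset.mem_insert, not_or] at hxa hxb
      have htx := hfix x hxa.2 hxb.2
      have hxt : x ≠ t (a j) := fun e => hxa.1 (t.injective (htx.trans e))
      simp [htx, Equiv.swap_apply_of_ne_of_ne hxt hxb.1]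

theorem mem_SInf_of_forall_notMem {t : Equiv.Perm ℕ} {S : Set ℕ} (hS : S.Finite)
    (ht : ∀ x ∉ S, t x = x) : t ∈ SInf :=
  hS.subset fun x hx => by_contra fun h => hx (ht x h)

theorem exists_shift (F : Finset ℕ) (B : ℕ) :
    ∃ t : SInf, (∀ x ∈ F, t.1 x = x + B) ∧ ∀ x < B, x ∉ F → t.1 x = x := by
  obtain ⟨t, hshift, hfix⟩ := exists_perm_apply_eq_of_injOn F (a := id) (b := (· + B))
    (Set.injOn_id _) (fun x _ y _ h => by simpa using h)
  refine ⟨⟨t, mem_SInf_of_forall_notMem ((F ∪ F.image (· + B)).finite_toSet)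
    fun x hx => hfix x (by simp_all) (by simp_all)⟩, hshift, fun x hx hxF => hfix x (by simpa) ?_⟩
  simp only [Finset.mem_image, not_exists, not_and]
  intro y _ hy
  omega

theorem exists_conj_fixing_eventually_commute {g h : WG Γ} (hd : Disjoint (supp g) (supp h)) :
    ∃ t : ℕ → SInf, (∀ k, permW (t k) * g * (permW (t k))⁻¹ = g) ∧
      ∀ g', ∀ᶠ k in atTop, Commute (permW (t k) * h * (permW (t k))⁻¹) g' := by
  obtain ⟨M, hM⟩ := (supp_finite g).bddAbove
  choose t ht hfix using fun k => exists_shift (supp_finite h).toFinset (M + 1 + k)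
  refine ⟨t, fun k => conj_eq_self fun j hj => hfix k j ?_ ?_, fun g' => ?_⟩
  · have := hM hj
    omega
  · simpa using Set.disjoint_left.1 hd hj
  obtain ⟨N, hN⟩ := (supp_finite g').bddAbove
  refine eventually_atTop.2 ⟨N, fun k hk =>
    commute_of_disjoint (Set.disjoint_left.2 fun j hj hj' => ?_)⟩
  have hshift := ht k _ ((supp_finite h).mem_toFinset.2 (mem_supp_conj.1 hj))
  simp only [Equiv.Perm.coe_inv, Equiv.apply_symm_apply] at hshift
  have := hN hj'
  omega

theorem mem_periodicPts_of_mem_SInf {s : Equiv.Perm ℕ} (hs : s ∈ SInf) (i : ℕ) :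
    i ∈ Function.periodicPts s := by
  have horbit : ∀ n, (s ^ n) i ∈ insert i {x | s x ≠ x} := fun n => by
    by_cases h : s ((s ^ n) i) = (s ^ n) i
    · have : s.SameCycle i ((s ^ n) i) := ⟨n, by simp⟩
      exact Or.inl (Equiv.Perm.pow_apply_eq_self_of_apply_eq_self (this.apply_eq_self_iff.2 h) n)
    · exact Or.inr h
  obtain ⟨a, b, hab, he⟩ := Set.Finite.exists_lt_map_eq_of_forall_mem horbit (hs.insert i)
  refine Function.mk_mem_periodicPts (n := b - a) (by omega) ?_
  rw [Function.IsPeriodicPt, Function.IsFixedPt, ← Equiv.Perm.coe_pow]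
  apply (s ^ a).injective
  rw [← Equiv.Perm.mul_apply, ← pow_add, Nat.add_sub_cancel' hab.le, he]

theorem sameCycle_iff_exists_lt_minimalPeriod {s : Equiv.Perm ℕ} {i : ℕ}
    (hi : i ∈ Function.periodicPts s) (j : ℕ) :
    s.SameCycle i j ↔ ∃ k < Function.minimalPeriod s i, (s ^ k) i = j := by
  have hm := Function.minimalPeriod_pos_of_mem_periodicPts hi
  constructor
  · rintro ⟨n, rfl⟩
    have h := MulAction.zpow_smul_mod_minimalPeriod s i n
    simp only [Equiv.Perm.smul_def] at h
    have hlt := Int.emod_lt_of_pos n (Int.natCast_pos.2 hm)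
    refine ⟨(n % Function.minimalPeriod s i).toNat, by omega, ?_⟩
    rw [← h, ← zpow_natCast, Int.toNat_of_nonneg (Int.emod_nonneg _ (by omega))]
  · rintro ⟨k, -, rfl⟩
    exact ⟨k, by simp⟩

theorem cycleAt_apply (s : Equiv.Perm ℕ) (i j : ℕ) :
    cycleAt s i j = if s.SameCycle i j then s j else j := rfl

theorem cycleAt_symm_apply (s : Equiv.Perm ℕ) (i j : ℕ) :
    (cycleAt s i).symm j = if s.SameCycle i j then s.symm j else j := rfl

theorem sigmaPerm_apply (m k : ℕ) :
    sigmaPerm m k = if k + 1 < m then k + 1 else if k + 1 = m then 0 else k := rfl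

theorem sigmaPerm_apply_of_ge {m k : ℕ} (h : m ≤ k) : sigmaPerm m k = k := by
  rw [sigmaPerm_apply]
  split_ifs <;> omega

theorem exists_conj_cycleAt_eq_sigmaPerm {s : Equiv.Perm ℕ} (hs : s ∈ SInf) (i : ℕ) :
    ∃ (m : ℕ) (t : SInf), t.1 * cycleAt s i * t.1⁻¹ = sigmaPerm m ∧
      ∀ j, s.SameCycle i j → t.1 j < m := by
  set m := Function.minimalPeriod s i
  have hper := mem_periodicPts_of_mem_SInf hs i
  have horbit := sameCycle_iff_exists_lt_minimalPeriod hper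
  have hperiod : (s ^ m) i = (s ^ 0) i := by
    rw [Equiv.Perm.coe_pow]; exact Function.iterate_minimalPeriod
  have hinj : Set.InjOn (fun k => (s ^ k) i) (Finset.range m) := by
    simpa [Equiv.Perm.coe_pow] using Function.iterate_injOn_Iio_minimalPeriod
  -- `t` relabels the orbit `(s ^ k) i`, `k < m`, of `i` as `0, …, m - 1`.
  obtain ⟨t, ht, hfix⟩ := exists_perm_apply_eq_of_injOn _ hinj (Set.injOn_id _)
  have htmem : t ∈ SInf := mem_SInf_of_forall_notMem
    (((Finset.range m).image fun k => (s ^ k) i) ∪ (Finset.range m).image id).finite_toSet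
    fun x hx => hfix x (by simp_all) (by simp_all)
  have ht' : ∀ k < m, t ((s ^ k) i) = k := fun k hk => ht k (Finset.mem_range.2 hk)
  have hlt : ∀ j, s.SameCycle i j → t j < m := fun j hj => by
    obtain ⟨k, hk, rfl⟩ := (horbit j).1 hj
    rwa [ht' k hk]
  refine ⟨m, ⟨t, htmem⟩, mul_inv_eq_of_eq_mul (Equiv.ext fun x => ?_), hlt⟩
  simp only [Equiv.Perm.mul_apply, cycleAt_apply]
  split_ifs with hx
  · obtain ⟨k, hk, rfl⟩ := (horbit x).1 hx
    rw [ht' k hk, ← Equiv.Perm.mul_apply s, ← pow_succ', sigmaPerm_apply]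
    by_cases hk1 : k + 1 < m
    · rw [ht' _ hk1, if_pos hk1]
    · have hk1' : k + 1 = m := by omega
      rw [hk1', hperiod, ht' 0 (by omega), if_neg (by omega), if_pos rfl]
  · have hge : m ≤ t x := by
      by_contra! hlt
      refine hx ((horbit x).2 ⟨t x, hlt, t.injective ?_⟩)
      rw [ht' _ hlt]
    rw [sigmaPerm_apply, if_neg (by omega), if_neg (by omega)]

theorem coe_genCycle_right (g : WG Γ) (i : ℕ) :
    ((genCycle g i : WG Γ) : W Γ).right = cycleAt (g : W Γ).right i := by
  simp [genCycle, permW, seqW]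

theorem coe_genCycle_left_apply (g : WG Γ) (i j : ℕ) :
    ((genCycle g i : WG Γ) : W Γ).left j =
      if ((g : W Γ).right).SameCycle i j then (g : W Γ).left j else 1 := by
  by_cases h : (g : W Γ).right.SameCycle i j <;> simp [genCycle, permW, seqW, cycleAt_symm_apply, h]

theorem supp_genCycle_subset (g : WG Γ) (i : ℕ) :
    supp (genCycle g i) ⊆ {j | ((g : W Γ).right).SameCycle i j} := by
  intro j hj
  simp [supp, coe_genCycle_right, coe_genCycle_left_apply, cycleAt_apply] at hj
  rcases hj with ⟨h, -⟩ | ⟨h, -⟩ <;> exact h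

theorem supp_inv_genCycle_mul_subset (g : WG Γ) (i : ℕ) :
    supp ((genCycle g i)⁻¹ * g) ⊆ supp g \ {j | ((g : W Γ).right).SameCycle i j} := by
  intro j hj
  have hs := (Equiv.Perm.sameCycle_apply_right (f := (g : W Γ).right) (x := i) (y := j))
  by_cases h : (g : W Γ).right.SameCycle i j <;>
    simp [supp, coe_genCycle_right, coe_genCycle_left_apply, cycleAt_apply, cycleAt_symm_apply,
      hs, h] at hj ⊢
  exact hj

theorem exists_conj_genCycle_eq (g : WG Γ) (i : ℕ) :
    ∃ (m : ℕ) (t : SInf) (γ : GammaE Γ), (∀ k, m ≤ k → (γ : ℕ → Γ) k = 1) ∧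
      permW t * genCycle g i * (permW t)⁻¹ = permW ⟨sigmaPerm m, sigmaPerm_mem m⟩ * seqW γ := by
  obtain ⟨m, t, hconj, hlt⟩ := exists_conj_cycleAt_eq_sigmaPerm g.2.1 i
  set x := permW t * genCycle g i * (permW t)⁻¹ with hx
  have hright : (x : W Γ).right = sigmaPerm m := by
    rw [hx, coe_conj, coe_genCycle_right]
    exact hconj
  have hleft : ∀ k, m ≤ k → (x : W Γ).left k = 1 := fun k hk => by
    refine (notMem_supp.1 fun hk' => ?_).2
    have := hlt _ (supp_genCycle_subset g i (mem_supp_conj.1 hk'))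
    simp only [Equiv.Perm.coe_inv, Equiv.apply_symm_apply] at this
    omega
  have hγ : ∀ k, m ≤ k → (x : W Γ).left (sigmaPerm m k) = 1 := fun k hk => by
    rw [sigmaPerm_apply_of_ge hk, hleft k hk]
  refine ⟨m, t, ⟨fun k => (x : W Γ).left (sigmaPerm m k),
    (Set.finite_Iio m).subset fun k hk => ?_⟩, hγ, ?_⟩
  · by_contra h
    exact hk (hγ k (not_lt.1 h))
  · refine Subtype.ext (SemidirectProduct.ext (funext fun j => ?_) hright)
    simp [permW, seqW, hx]

theorem eq_of_forall_genCycle_eq {φ₁ φ₂ : WG Γ → ℂ}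
    (hmul₁ : ∀ g h, Disjoint (supp g) (supp h) → φ₁ (g * h) = φ₁ g * φ₁ h)
    (hmul₂ : ∀ g h, Disjoint (supp g) (supp h) → φ₂ (g * h) = φ₂ g * φ₂ h)
    (hone : φ₁ 1 = φ₂ 1) (hcycle : ∀ g i, φ₁ (genCycle g i) = φ₂ (genCycle g i)) : φ₁ = φ₂ := by
  funext g
  induction hn : (supp g).ncard using Nat.strong_induction_on generalizing g with
  | _ n ih =>
    rcases (supp g).eq_empty_or_nonempty with h | ⟨i, hi⟩
    · rw [eq_one_of_supp_eq_empty h, hone]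
    have hsub := supp_inv_genCycle_mul_subset g i
    have hd : Disjoint (supp (genCycle g i)) (supp ((genCycle g i)⁻¹ * g)) :=
      Set.disjoint_left.2 fun j hj hj' => (hsub hj').2 (supp_genCycle_subset g i hj)
    have hlt : (supp ((genCycle g i)⁻¹ * g)).ncard < n := hn ▸ Set.ncard_lt_ncard
      (hsub.trans_ssubset (Set.sdiff_ssubset_left_iff.2 ⟨i, hi, Equiv.Perm.SameCycle.refl _ _⟩))
      (supp_finite g)
    rw [← mul_inv_cancel_left (genCycle g i) g, hmul₁ _ _ hd, hmul₂ _ _ hd, hcycle,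
      ih _ hlt _ rfl]

theorem norm_le_one_of_mem_unitary {A : H →L[ℂ] H} (hA : A ∈ unitary (H →L[ℂ] H)) : ‖A‖ ≤ 1 :=
  A.opNorm_le_bound zero_le_one fun x => by
    rw [ContinuousLinearMap.norm_map_of_mem_unitary hA, one_mul]

theorem exists_tendsto_inner_of_norm_le {α : Type*} (U : Ultrafilter α) (A : α → H →L[ℂ] H)
    {C : ℝ} (hA : ∀ k, ‖A k‖ ≤ C) :
    ∃ T : H →L[ℂ] H, ∀ x y, Tendsto (fun k => ⟪x, A k y⟫) U (𝓝 ⟪x, T y⟫) := by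
  have hbound : ∀ x y k, ‖⟪x, A k y⟫‖ ≤ C * ‖x‖ * ‖y‖ := fun x y k =>
    calc ‖⟪x, A k y⟫‖ ≤ ‖x‖ * (‖A k‖ * ‖y‖) :=
          (norm_inner_le_norm x _).trans (by gcongr; exact (A k).le_opNorm y)
      _ ≤ ‖x‖ * (C * ‖y‖) := by gcongr; exact hA k
      _ = C * ‖x‖ * ‖y‖ := by ring
  have hlim : ∀ x y, ∃ c, Tendsto (fun k => ⟪x, A k y⟫) U (𝓝 c) := fun x y => by
    obtain ⟨c, -, hc⟩ := (isCompact_closedBall (0 : ℂ) (C * ‖x‖ * ‖y‖)).ultrafilter_le_nhds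
      (U.map fun k => ⟪x, A k y⟫) (by
        rw [Ultrafilter.coe_map, le_principal_iff]
        exact mem_map.2 (univ_mem' fun k => mem_closedBall_zero_iff.2 (hbound x y k)))
    exact ⟨c, hc⟩
  choose L hL using hlim
  have hL_eq : ∀ {x y c}, Tendsto (fun k => ⟪x, A k y⟫) U (𝓝 c) → L x y = c :=
    fun h => tendsto_nhds_unique (hL _ _) h
  let B : H →L⋆[ℂ] H →L[ℂ] ℂ := LinearMap.mkContinuous₂
    (LinearMap.mk₂'ₛₗ (starRingEnd ℂ) (RingHom.id ℂ) L
      (fun x x' y => hL_eq (by simpa only [inner_add_left] using (hL x y).add (hL x' y)))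
      (fun c x y => hL_eq (by simpa only [inner_smul_left, smul_eq_mul] using (hL x y).const_mul _))
      (fun x y y' => hL_eq (by simpa only [map_add, inner_add_right] using (hL x y).add (hL x y')))
      (fun c x y => hL_eq (by
        simpa only [map_smul, inner_smul_right, RingHom.id_apply, smul_eq_mul]
          using (hL x y).const_mul c)))
    C fun x y => le_of_tendsto (hL x y).norm (Eventually.of_forall (hbound x y))
  refine ⟨ContinuousLinearMap.adjoint (InnerProductSpace.continuousLinearMapOfBilin B),
    fun x y => ?_⟩
  rw [ContinuousLinearMap.adjoint_inner_right, InnerProductSpace.continuousLinearMapOfBilin_apply]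
  exact hL x y

theorem commute_of_tendsto_inner {α : Type*} {l : Filter α} [l.NeBot] {A : α → H →L[ℂ] H}
    {T S : H →L[ℂ] H} (hT : ∀ x y, Tendsto (fun k => ⟪x, A k y⟫) l (𝓝 ⟪x, T y⟫))
    (hS : ∀ᶠ k in l, Commute (A k) S) : Commute T S := by
  refine ContinuousLinearMap.ext fun y => ext_inner_left ℂ fun x => ?_
  have hlim : Tendsto (fun k => ⟪x, A k (S y)⟫) l (𝓝 ⟪x, S (T y)⟫) := by
    rw [← ContinuousLinearMap.adjoint_inner_left]
    refine (hT _ y).congr' (hS.mono fun k hk => ?_)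
    rw [ContinuousLinearMap.adjoint_inner_left, ← mul_apply_eq_comp, ← hk.eq]
    rfl
  exact tendsto_nhds_unique (hT x (S y)) hlim

theorem IsFactorial.exists_tendsto_inner_smul {π : WG Γ →* (H →L[ℂ] H)} (hfact : IsFactorial π)
    (hu : ∀ g, π g ∈ unitary (H →L[ℂ] H)) {α : Type*} {l : Filter α} {w : α → WG Γ}
    (hw : ∀ g, ∀ᶠ k in l, Commute (w k) g) (U : Ultrafilter α) (hU : ↑U ≤ l) :
    ∃ c : ℂ, ∀ x y, Tendsto (fun k => ⟪x, π (w k) y⟫) U (𝓝 (c * ⟪x, y⟫)) := by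
  obtain ⟨T, hT⟩ := exists_tendsto_inner_of_norm_le U (fun k => π (w k))
    fun k => norm_le_one_of_mem_unitary (hu _)
  have hcomm : T ∈ commutant (repSet π) := by
    rintro _ ⟨g, rfl⟩
    exact (commute_of_tendsto_inner hT (((hw g).filter_mono hU).mono fun k hk => hk.map π)).eq
  have hcenter : T ∈ vN π := fun S hS =>
    (commute_of_tendsto_inner hT (Eventually.of_forall fun k => (hS _ ⟨w k, rfl⟩).symm)).eq
  obtain ⟨c, rfl⟩ := hfact T ⟨hcomm, hcenter⟩
  exact ⟨c, fun x y => by simpa [inner_smul_right] using hT x y⟩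

theorem IsGNS.inner_self {φ : WG Γ → ℂ} {π : WG Γ →* (H →L[ℂ] H)} {ξ : H}
    (hGNS : IsGNS φ π ξ) : ⟪ξ, ξ⟫ = 1 := by
  rw [inner_self_eq_norm_sq_to_K, hGNS.norm_one]
  norm_num

theorem IsGNS.apply_one {φ : WG Γ → ℂ} {π : WG Γ →* (H →L[ℂ] H)} {ξ : H}
    (hGNS : IsGNS φ π ξ) : φ 1 = 1 := by
  rw [hGNS.inner_eq, map_one, one_apply_eq_self, hGNS.inner_self]

theorem IsGNS.tendsto_apply_mul_sub_mul {φ : WG Γ → ℂ} {π : WG Γ →* (H →L[ℂ] H)} {ξ : H}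
    (hGNS : IsGNS φ π ξ) (hfact : IsFactorial π) {α : Type*} {l : Filter α} {w : α → WG Γ}
    (hw : ∀ g, ∀ᶠ k in l, Commute (w k) g) (g : WG Γ) :
    Tendsto (fun k => φ (g * w k) - φ g * φ (w k)) l (𝓝 0) := by
  rw [tendsto_iff_ultrafilter]
  intro U hU
  obtain ⟨c, hc⟩ := hfact.exists_tendsto_inner_smul hGNS.unitary hw U hU
  have hprod : Tendsto (fun k => φ (g * w k)) U (𝓝 (c * φ g)) := by
    simpa only [ContinuousLinearMap.adjoint_inner_left, hGNS.inner_eq, map_mul,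
      mul_apply_eq_comp] using hc (ContinuousLinearMap.adjoint (π g) ξ) ξ
  have hw : Tendsto (fun k => φ (w k)) U (𝓝 c) := by
    simpa only [← hGNS.inner_eq, hGNS.inner_self, mul_one] using hc ξ ξ
  simpa [mul_comm] using hprod.sub (hw.const_mul (φ g))

theorem IsGNS.map_mul_of_disjoint {φ : WG Γ → ℂ} {π : WG Γ →* (H →L[ℂ] H)} {ξ : H}
    (hGNS : IsGNS φ π ξ) (hcentral : IsSCentral φ) (hfact : IsFactorial π) {g h : WG Γ}
    (hd : Disjoint (supp g) (supp h)) : φ (g * h) = φ g * φ h := by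
  obtain ⟨t, hg, hw⟩ := exists_conj_fixing_eventually_commute hd
  have hlim := hGNS.tendsto_apply_mul_sub_mul hfact hw g
  have hconst : ∀ k, g * (permW (t k) * h * (permW (t k))⁻¹) =
      permW (t k) * (g * h) * (permW (t k))⁻¹ := fun k => by
    conv_lhs => rw [← hg k]
    group
  simp only [hconst, show ∀ s x, φ (permW s * x * (permW s)⁻¹) = φ x from hcentral] at hlim
  exact sub_eq_zero.1 (tendsto_nhds_unique tendsto_const_nhds hlim)

theorem statement_8_general {Γ : Type*} [Group Γ]
    {H₁ : Type*} [NormedAddCommGroup H₁] [InnerProductSpace ℂ H₁] [CompleteSpace H₁]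
    {H₂ : Type*} [NormedAddCommGroup H₂] [InnerProductSpace ℂ H₂] [CompleteSpace H₂]
    (φ₁ φ₂ : WG Γ → ℂ)
    (hcentral₁ : IsSCentral φ₁)
    (hcentral₂ : IsSCentral φ₂)
    (π₁ : WG Γ →* (H₁ →L[ℂ] H₁)) (ξ₁ : H₁) (hGNS₁ : IsGNS φ₁ π₁ ξ₁)
    (π₂ : WG Γ →* (H₂ →L[ℂ] H₂)) (ξ₂ : H₂) (hGNS₂ : IsGNS φ₂ π₂ ξ₂)
    (hfact₁ : IsFactorial π₁) (hfact₂ : IsFactorial π₂)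
    (hagree : ∀ (n : ℕ) (γ : GammaE Γ), (∀ i, n ≤ i → (γ : ℕ → Γ) i = 1) →
      φ₁ (permW ⟨sigmaPerm n, sigmaPerm_mem n⟩ * seqW γ) =
      φ₂ (permW ⟨sigmaPerm n, sigmaPerm_mem n⟩ * seqW γ)) :
    φ₁ = φ₂ := by
  refine eq_of_forall_genCycle_eq (fun _ _ => hGNS₁.map_mul_of_disjoint hcentral₁ hfact₁)
    (fun _ _ => hGNS₂.map_mul_of_disjoint hcentral₂ hfact₂)
    (by rw [hGNS₁.apply_one, hGNS₂.apply_one]) fun g i => ?_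
  obtain ⟨m, t, γ, hγ, hconj⟩ := exists_conj_genCycle_eq g i
  rw [← hcentral₁ t, ← hcentral₂ t, hconj]
  exact hagree m γ hγ

theorem statement_8 {Γ : Type*} [Group Γ]
    {H₁ : Type*} [NormedAddCommGroup H₁] [InnerProductSpace ℂ H₁] [CompleteSpace H₁]
    {H₂ : Type*} [NormedAddCommGroup H₂] [InnerProductSpace ℂ H₂] [CompleteSpace H₂]
    (φ₁ φ₂ : WG Γ → ℂ)
    (hstate₁ : IsState φ₁) (hcentral₁ : IsSCentral φ₁)
    (hstate₂ : IsState φ₂) (hcentral₂ : IsSCentral φ₂)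
    (π₁ : WG Γ →* (H₁ →L[ℂ] H₁)) (ξ₁ : H₁) (hGNS₁ : IsGNS φ₁ π₁ ξ₁)
    (π₂ : WG Γ →* (H₂ →L[ℂ] H₂)) (ξ₂ : H₂) (hGNS₂ : IsGNS φ₂ π₂ ξ₂)
    (hfact₁ : IsFactorial π₁) (hfact₂ : IsFactorial π₂)
    (hagree : ∀ (n : ℕ) (γ : GammaE Γ), (∀ i, n ≤ i → (γ : ℕ → Γ) i = 1) →
      φ₁ (permW ⟨sigmaPerm n, sigmaPerm_mem n⟩ * seqW γ) =
      φ₂ (permW ⟨sigmaPerm n, sigmaPerm_mem n⟩ * seqW γ)) :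
    φ₁ = φ₂ :=
  statement_8_general φ₁ φ₂ hcentral₁ hcentral₂ π₁ ξ₁ hGNS₁ π₂ ξ₂ hGNS₂ hfact₁ hfact₂ hagree

end DN
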